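/- Let x, y, r, z be points in ℝ² such that z lies on the segment from x to y, the segment rz is perpendicular to xy, ‖r − z‖ ≤ √ε·L, and ‖x − z‖ ≥ L/32 and ‖y − z‖ ≥ L/32 for some L > 0 and 0 < ε. Then ‖r − x‖ + ‖r − y‖ ≤ (1 + 512ε)·‖x − y‖. -/

import Mathlib

set_option maxHeartbeats 1000000 in
theorem stmt_0 (x y r z : EuclideanSpace ℝ (Fin 2)) (L ε : ℝ)
    (hL : 0 < L) (hε : 0 < ε)
    (hseg : ‖x - y‖ = ‖x - z‖ + ‖z - y‖)
    (hperp : (inner ℝ (r - z) (y - x) : ℝ) = 0)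
    (hrz : ‖r - z‖ ≤ Real.sqrt ε * L)
    (hxz : L / 32 ≤ ‖x - z‖) (hyz : L / 32 ≤ ‖y - z‖) :
    ‖r - x‖ + ‖r - y‖ ≤ (1 + 512 * ε) * ‖x - y‖ := by
  have hzy : ‖z - y‖ = ‖y - z‖ := norm_sub_rev _ _
  have haz : (0:ℝ) < ‖x - z‖ := lt_of_lt_of_le (by linarith) hxz
  have hbz : (0:ℝ) < ‖z - y‖ := by rw [hzy]; exact lt_of_lt_of_le (by linarith) hyz
  have hray : SameRay ℝ (x - z) (z - y) := by
    rw [sameRay_iff_norm_add]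
    rw [show (x - z) + (z - y) = x - y by abel]
    exact hseg
  rcases hray with h0 | h0 | ⟨r₁, r₂, hr₁, hr₂, hsm⟩
  · exact absurd (by simp [h0] : ‖x - z‖ = 0) (ne_of_gt haz)
  · exact absurd (by simp [h0] : ‖z - y‖ = 0) (ne_of_gt hbz)
  have hAB : (inner ℝ (r - z) (x - z) : ℝ) + (inner ℝ (r - z) (z - y) : ℝ) = 0 := by
    have h2 := hperp
    rw [show y - x = -((x - z) + (z - y)) by abel] at h2
    rw [inner_neg_right, inner_add_right, neg_eq_zero] at h2
    exact h2
  have hsm' : r₁ * (inner ℝ (r - z) (x - z) : ℝ) = r₂ * (inner ℝ (r - z) (z - y) : ℝ) := by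
    rw [← real_inner_smul_right, ← real_inner_smul_right, hsm]
  have hA : (inner ℝ (r - z) (x - z) : ℝ) = 0 := by
    have : (r₁ + r₂) * (inner ℝ (r - z) (x - z) : ℝ) = 0 := by nlinarith [hsm', hAB]
    have hpos : r₁ + r₂ ≠ 0 := by positivity
    exact (mul_eq_zero.mp this).resolve_left hpos
  have hB : (inner ℝ (r - z) (z - y) : ℝ) = 0 := by linarith
  have hnx : ‖r - x‖ ^ 2 = ‖r - z‖ ^ 2 + ‖x - z‖ ^ 2 := by
    have hiz : (inner ℝ (r - z) (z - x) : ℝ) = 0 := by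
      rw [show z - x = -(x - z) by abel, inner_neg_right, hA, neg_zero]
    have := norm_add_sq_real (r - z) (z - x)
    rw [show (r - z) + (z - x) = r - x by abel, hiz] at this
    rw [this, norm_sub_rev x z]; ring
  have hny : ‖r - y‖ ^ 2 = ‖r - z‖ ^ 2 + ‖z - y‖ ^ 2 := by
    have := norm_add_sq_real (r - z) (z - y)
    rw [show (r - z) + (z - y) = r - y by abel, hB] at this
    rw [this]; ring
  have hh2 : ‖r - z‖ ^ 2 ≤ ε * L ^ 2 := by
    have h1 : ‖r - z‖ ^ 2 ≤ (Real.sqrt ε * L) ^ 2 :=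
      pow_le_pow_left₀ (norm_nonneg _) hrz 2
    calc ‖r - z‖ ^ 2 ≤ (Real.sqrt ε * L) ^ 2 := h1
      _ = ε * L ^ 2 := by rw [mul_pow, Real.sq_sqrt hε.le]
  have hL32x : L ≤ 32 * ‖x - z‖ := by linarith
  have hL32y : L ≤ 32 * ‖z - y‖ := by rw [hzy]; linarith
  have key : ∀ a : ℝ, 0 < a → L ≤ 32 * a → ∀ w : ℝ, 0 ≤ w →
      w ^ 2 = ‖r - z‖ ^ 2 + a ^ 2 → w ≤ (1 + 512 * ε) * a := by
    intro a ha hLa w hw hw2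
    have hq : L * L ≤ (32 * a) * (32 * a) :=
      mul_le_mul hLa hLa hL.le (by positivity)
    have hq2 : ε * (L * L) ≤ ε * ((32 * a) * (32 * a)) :=
      mul_le_mul_of_nonneg_left hq hε.le
    rw [← pow_le_pow_iff_left₀ hw (by positivity : (0:ℝ) ≤ (1 + 512 * ε) * a) two_ne_zero]
    nlinarith [sq_nonneg (512 * ε * a), hq2, hh2, hw2]
  have h1 := key ‖x - z‖ haz hL32x ‖r - x‖ (norm_nonneg _) hnx
  have h2 := key ‖z - y‖ hbz hL32y ‖r - y‖ (norm_nonneg _) hny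
  rw [hseg, mul_add]
  linarith [h1, h2]
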